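/- The Ronkin function of a Laurent polynomial P is affine (linear plus constant) on each connected component of the complement of the amoeba of P. -/

import Mathlib

/-- Evaluation of a Laurent polynomial `P ∈ ℂ[z^{±1}, w^{±1}]` (given by its finitely
supported coefficient function on exponents) at `(z, w) ∈ (ℂ*)²`. -/
noncomputable def lEval (P : (ℤ × ℤ) →₀ ℂ) (z w : ℂ) : ℂ :=
  P.sum fun a c => c * z ^ a.1 * w ^ a.2

/-- The Ronkin function of `P`: the average of `log |P|` over the torus
`{|z| = e^x, |w| = e^y}`. -/
noncomputable def ronkin (P : (ℤ × ℤ) →₀ ℂ) (p : ℝ × ℝ) : ℝ :=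
  (2 * Real.pi)⁻¹ ^ 2 *
    ∫ θ in (0:ℝ)..(2 * Real.pi), ∫ φ in (0:ℝ)..(2 * Real.pi),
      Real.log ‖
        (lEval P (Complex.exp ((p.1 : ℂ) + θ * Complex.I))
                 (Complex.exp ((p.2 : ℂ) + φ * Complex.I)))‖

/-- The amoeba of `P`: the image of the zero locus of `P` in `(ℂ*)²` under
`(z, w) ↦ (log |z|, log |w|)`. -/
def amoeba (P : (ℤ × ℤ) →₀ ℂ) : Set (ℝ × ℝ) :=
  {p | ∃ z w : ℂ, z ≠ 0 ∧ w ≠ 0 ∧ lEval P z w = 0 ∧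
    ‖z‖ = Real.exp p.1 ∧ ‖w‖ = Real.exp p.2}

/-!
Write `f ζ = P(e^{ζ₁}, e^{ζ₂})`, an entire function on `ℂ²` that is `2πi`-periodic in each
variable; the Ronkin function at `q` is then `(2π)⁻²` times the integral of `log |f|` over
`q + i t`, `t ∈ [0, 2π]²`. Off the amoeba we may differentiate under the integral: the partial
derivatives of the Ronkin function are the real parts of the angle integrals of `∂ₖf / f`. These
integrals are locally constant, because for a holomorphic `g` the derivative of `g(x + iθ, ·)` in
`x` is `-i` times its derivative in `θ`, whose integral over a period vanishes. A function with
constant gradient on a connected open set is affine.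
-/

open Complex MeasureTheory Metric Set Filter Topology
open scoped Real

section PartialDerivatives

variable {Y : Type*} [NormedAddCommGroup Y] [NormedSpace ℝ Y]

theorem hasFDerivAt_zero_of_hasDerivAt_fst_snd_zero {F : ℝ × ℝ → Y} {q : ℝ × ℝ}
    (h₁ : ∀ᶠ r in 𝓝 q, HasDerivAt (fun x => F (x, r.2)) 0 r.1)
    (h₂ : ∀ᶠ r in 𝓝 q, HasDerivAt (fun y => F (r.1, y)) 0 r.2) :
    HasFDerivAt F (0 : ℝ × ℝ →L[ℝ] Y) q := by
  have h := hasStrictFDerivAt_uncurry_coprod (f := fun x y => F (x, y))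
    (f₁ := fun _ _ => (0 : ℝ →L[ℝ] Y)) (f₂ := fun _ _ => (0 : ℝ →L[ℝ] Y)) (u := q)
    (h₁.mono fun r hr => hr.hasFDerivAt.congr_fderiv (by ext; simp [Function.HasUncurry.uncurry]))
    (h₂.mono fun r hr => hr.hasFDerivAt.congr_fderiv (by ext; simp [Function.HasUncurry.uncurry]))
    continuousAt_const continuousAt_const
  exact h.hasFDerivAt.congr_fderiv (by ext <;> simp [Function.HasUncurry.uncurry])

theorem IsOpen.eq_of_hasDerivAt_fst_snd_zero {S : Set (ℝ × ℝ)} (hS : IsOpen S)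
    (hS' : IsPreconnected S) {F : ℝ × ℝ → Y}
    (h₁ : ∀ q ∈ S, HasDerivAt (fun x => F (x, q.2)) 0 q.1)
    (h₂ : ∀ q ∈ S, HasDerivAt (fun y => F (q.1, y)) 0 q.2) {p q : ℝ × ℝ}
    (hp : p ∈ S) (hq : q ∈ S) : F q = F p := by
  have hF : ∀ r ∈ S, HasFDerivAt F (0 : ℝ × ℝ →L[ℝ] Y) r := fun r hr =>
    hasFDerivAt_zero_of_hasDerivAt_fst_snd_zero (eventually_of_mem (hS.mem_nhds hr) h₁)
      (eventually_of_mem (hS.mem_nhds hr) h₂)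
  exact hS.is_const_of_fderiv_eq_zero hS'
    (fun r hr => (hF r hr).differentiableAt.differentiableWithinAt)
    (fun r hr => (hF r hr).fderiv) hq hp

theorem IsOpen.exists_eq_affine_of_hasDerivAt_fst_snd {S : Set (ℝ × ℝ)} (hS : IsOpen S)
    (hS' : IsPreconnected S) {G : ℝ × ℝ → ℝ} {a b : ℝ}
    (h₁ : ∀ q ∈ S, HasDerivAt (fun x => G (x, q.2)) a q.1)
    (h₂ : ∀ q ∈ S, HasDerivAt (fun y => G (q.1, y)) b q.2) :
    ∃ c, ∀ q ∈ S, G q = a * q.1 + b * q.2 + c := by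
  rcases S.eq_empty_or_nonempty with rfl | ⟨p, hp⟩
  · exact ⟨0, by simp⟩
  refine ⟨G p - a * p.1 - b * p.2, fun q hq => ?_⟩
  have := hS.eq_of_hasDerivAt_fst_snd_zero hS' (F := fun r => G r - (a * r.1 + b * r.2))
    (fun r hr => by
      simpa using (h₁ r hr).fun_sub (((hasDerivAt_id r.1).const_mul a).add_const (b * r.2)))
    (fun r hr => by
      simpa using (h₂ r hr).fun_sub (((hasDerivAt_id r.2).const_mul b).const_add (a * r.1)))
    hp hq
  linarith

end PartialDerivatives

theorem hasDerivAt_setIntegral_of_continuousOn {α Y : Type*} [TopologicalSpace α]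
    [MeasurableSpace α] [OpensMeasurableSpace α] {μ : Measure α} [IsFiniteMeasureOnCompacts μ]
    [NormedAddCommGroup Y] [NormedSpace ℝ Y] {K : Set α} (hK : IsCompact K)
    (hKm : MeasurableSet K) {F F' : ℝ → α → Y} {x₀ ε : ℝ} (hε : 0 < ε)
    (hF : ContinuousOn (Function.uncurry F) (closedBall x₀ ε ×ˢ K))
    (hF' : ContinuousOn (Function.uncurry F') (closedBall x₀ ε ×ˢ K))
    (hd : ∀ x ∈ ball x₀ ε, ∀ t ∈ K, HasDerivAt (F · t) (F' x t) x) :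
    HasDerivAt (fun x => ∫ t in K, F x t ∂μ) (∫ t in K, F' x₀ t ∂μ) x₀ := by
  have slice : ∀ {G : ℝ → α → Y}, ContinuousOn (Function.uncurry G) (closedBall x₀ ε ×ˢ K) →
      ∀ x ∈ closedBall x₀ ε, ContinuousOn (G x) K := fun hG x hx =>
    hG.comp (Continuous.prodMk_right x).continuousOn fun t ht => ⟨hx, ht⟩
  have hx₀ : x₀ ∈ closedBall x₀ ε := mem_closedBall_self hε.le
  obtain ⟨C, hC⟩ := ((isCompact_closedBall x₀ ε).prod hK).exists_bound_of_continuousOn hF'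
  refine (hasDerivAt_integral_of_dominated_loc_of_deriv_le (bound := fun _ => C)
    (ball_mem_nhds x₀ hε) ?_ ((slice hF x₀ hx₀).integrableOn_compact' hK hKm)
    ((slice hF' x₀ hx₀).aestronglyMeasurable_of_isCompact hK hKm) ?_
    (integrableOn_const hK.measure_ne_top) ?_).2
  · filter_upwards [closedBall_mem_nhds x₀ hε] with x hx
    exact (slice hF x hx).aestronglyMeasurable_of_isCompact hK hKm
  · filter_upwards [ae_restrict_mem hKm] with t ht x hx
    exact hC (x, t) ⟨ball_subset_closedBall hx, ht⟩
  · filter_upwards [ae_restrict_mem hKm] with t ht x hx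
    exact hd x hx t ht

theorem HasDerivAt.log_norm {f : ℝ → ℂ} {f' : ℂ} {x : ℝ} (hf : HasDerivAt f f' x)
    (hx : f x ≠ 0) : HasDerivAt (fun t => Real.log ‖f t‖) (f' / f x).re x := by
  have hsq : ‖f x‖ ^ 2 ≠ 0 := by positivity
  have hval : 2 * Inner.inner ℝ (f x) f' / ‖f x‖ ^ 2 / 2 = (f' / f x).re := by
    rw [Complex.div_re, Complex.inner, ← Complex.normSq_eq_norm_sq]
    field_simp
    simp [Complex.normSq_apply]
  simpa only [Real.log_pow, hval, Nat.cast_ofNat, mul_div_cancel_left₀ _ (two_ne_zero' ℝ)]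
    using (hf.norm_sq.log hsq).div_const 2

theorem Function.Periodic.fderiv {𝕜 E F : Type*} [NontriviallyNormedField 𝕜]
    [NormedAddCommGroup E] [NormedSpace 𝕜 E] [NormedAddCommGroup F] [NormedSpace 𝕜 F]
    {f : E → F} {c : E} (hf : Function.Periodic f c) : Function.Periodic (fderiv 𝕜 f) c :=
  fun x => by rw [← fderiv_comp_add_right, show (fun y => f (y + c)) = f from funext hf]

def angleBox : Set (ℝ × ℝ) := Icc 0 (2 * π) ×ˢ Icc 0 (2 * π)

def ofReIm (q t : ℝ × ℝ) : ℂ × ℂ := (q.1 + t.1 * I, q.2 + t.2 * I)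

noncomputable def angleIntegral {Y : Type*} [NormedAddCommGroup Y] [NormedSpace ℝ Y]
    (F : ℂ × ℂ → Y) (q : ℝ × ℝ) : Y :=
  ∫ t in angleBox, F (ofReIm q t)

theorem isCompact_angleBox : IsCompact angleBox := isCompact_Icc.prod isCompact_Icc

theorem measurableSet_angleBox : MeasurableSet angleBox :=
  measurableSet_Icc.prod measurableSet_Icc

@[fun_prop]
theorem continuous_ofReIm : Continuous fun p : (ℝ × ℝ) × (ℝ × ℝ) => ofReIm p.1 p.2 := by
  unfold ofReIm; fun_prop

theorem ofReIm_swap (q t : ℝ × ℝ) : ofReIm q.swap t.swap = (ofReIm q t).swap := rfl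

theorem ofReIm_add_two_pi_fst (q t : ℝ × ℝ) :
    ofReIm q (t.1 + 2 * π, t.2) = ofReIm q t + (2 * π * I, 0) := by
  simp only [ofReIm, Prod.mk_add_mk, add_zero]; push_cast; ring_nf

theorem ofReIm_add_two_pi_snd (q t : ℝ × ℝ) :
    ofReIm q (t.1, t.2 + 2 * π) = ofReIm q t + (0, 2 * π * I) := by
  simp only [ofReIm, Prod.mk_add_mk, add_zero]; push_cast; ring_nf

section AngleIntegral

variable {Y : Type*} [NormedAddCommGroup Y]

theorem integrableOn_angleBox {F : ℂ × ℂ → Y} {U : Set (ℂ × ℂ)} (hF : ContinuousOn F U)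
    {q : ℝ × ℝ} (hq : ∀ t, ofReIm q t ∈ U) :
    IntegrableOn (fun t => F (ofReIm q t)) angleBox :=
  (hF.comp (by fun_prop : Continuous fun t => ofReIm q t).continuousOn
    fun t _ => hq t).integrableOn_compact isCompact_angleBox

theorem angleIntegral_re {g : ℂ × ℂ → ℂ} {U : Set (ℂ × ℂ)} (hg : ContinuousOn g U)
    {q : ℝ × ℝ} (hq : ∀ t, ofReIm q t ∈ U) :
    angleIntegral (fun ζ => (g ζ).re) q = (angleIntegral g q).re :=
  integral_re (integrableOn_angleBox hg hq)

variable [NormedSpace ℝ Y]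

theorem angleIntegral_eq_intervalIntegral {F : ℂ × ℂ → Y} {q : ℝ × ℝ}
    (hF : IntegrableOn (fun t => F (ofReIm q t)) angleBox) :
    angleIntegral F q = ∫ θ in (0)..(2 * π), ∫ φ in (0)..(2 * π), F (ofReIm q (θ, φ)) := by
  rw [angleIntegral, angleBox, Measure.volume_eq_prod, setIntegral_prod _ hF]
  simp only [intervalIntegral.integral_of_le Real.two_pi_pos.le, integral_Icc_eq_integral_Ioc]

theorem angleIntegral_comp_swap (F : ℂ × ℂ → Y) (q : ℝ × ℝ) :
    angleIntegral (F ∘ Prod.swap) q = angleIntegral F q.swap := by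
  simp only [angleIntegral, Function.comp_def, ← ofReIm_swap]
  rw [angleBox, Measure.volume_eq_prod]
  exact setIntegral_prod_swap _ _ (fun t => F (ofReIm q.swap t))

theorem hasDerivAt_angleIntegral_fst {F F₁ : ℂ × ℂ → Y} {U : Set (ℂ × ℂ)}
    (hF : ContinuousOn F U) (hF₁ : ContinuousOn F₁ U)
    (hd : ∀ q t, ofReIm q t ∈ U →
      HasDerivAt (fun x => F (ofReIm (x, q.2) t)) (F₁ (ofReIm q t)) q.1)
    {q : ℝ × ℝ} (hq : ∀ᶠ r in 𝓝 q, ∀ t, ofReIm r t ∈ U) :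
    HasDerivAt (fun x => angleIntegral F (x, q.2)) (angleIntegral F₁ q) q.1 := by
  have hline : ∀ᶠ x in 𝓝 q.1, ∀ t, ofReIm (x, q.2) t ∈ U :=
    (Continuous.prodMk_left q.2).continuousAt.eventually hq
  obtain ⟨ε, hε, hball⟩ := nhds_basis_closedBall.eventually_iff.1 hline
  have hmaps : MapsTo (fun p : ℝ × (ℝ × ℝ) => ofReIm (p.1, q.2) p.2)
      (closedBall q.1 ε ×ˢ angleBox) U := fun p hp => hball hp.1 p.2
  simpa [angleIntegral] using hasDerivAt_setIntegral_of_continuousOn (μ := volume)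
    (F := fun x t => F (ofReIm (x, q.2) t)) (F' := fun x t => F₁ (ofReIm (x, q.2) t))
    isCompact_angleBox measurableSet_angleBox hε (hF.comp (by fun_prop) hmaps)
    (hF₁.comp (by fun_prop) hmaps)
    fun x hx t _ => hd (x, q.2) t (hball (ball_subset_closedBall hx) t)

theorem hasDerivAt_angleIntegral_snd {F F₂ : ℂ × ℂ → Y} {U : Set (ℂ × ℂ)}
    (hF : ContinuousOn F U) (hF₂ : ContinuousOn F₂ U)
    (hd : ∀ q t, ofReIm q t ∈ U →
      HasDerivAt (fun y => F (ofReIm (q.1, y) t)) (F₂ (ofReIm q t)) q.2)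
    {q : ℝ × ℝ} (hq : ∀ᶠ r in 𝓝 q, ∀ t, ofReIm r t ∈ U) :
    HasDerivAt (fun y => angleIntegral F (q.1, y)) (angleIntegral F₂ q) q.2 := by
  have hswap := hasDerivAt_angleIntegral_fst (F := F ∘ Prod.swap) (F₁ := F₂ ∘ Prod.swap)
    (U := Prod.swap ⁻¹' U) (hF.comp continuous_swap.continuousOn fun _ h => h)
    (hF₂.comp continuous_swap.continuousOn fun _ h => h)
    (fun r t h => by simpa [← ofReIm_swap] using hd r.swap t.swap h) (q := q.swap)
    (continuous_swap.continuousAt.eventually hq |>.mono fun r hr t => by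
      simpa [← ofReIm_swap] using hr t.swap)
  simpa only [angleIntegral_comp_swap, Prod.swap_prod_mk, Prod.fst_swap, Prod.snd_swap,
    Prod.swap_swap] using hswap

end AngleIntegral

section Periodic

variable {Y : Type*} [NormedAddCommGroup Y] [NormedSpace ℂ Y] [CompleteSpace Y]

theorem angleIntegral_eq_zero_of_hasDerivAt_angle_fst {g g₁ : ℂ × ℂ → Y}
    (hg : Function.Periodic g (2 * π * I, 0)) {q : ℝ × ℝ}
    (hg₁ : Continuous fun t => g₁ (ofReIm q t))
    (hd : ∀ t, HasDerivAt (fun θ => g (ofReIm q (θ, t.2))) (I • g₁ (ofReIm q t)) t.1) :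
    angleIntegral g₁ q = 0 := by
  have hperiod : ∀ φ : ℝ, ∫ θ in Icc 0 (2 * π), g₁ (ofReIm q (θ, φ)) = 0 := by
    intro φ
    have hftc := intervalIntegral.integral_eq_sub_of_hasDerivAt (a := 0) (b := 2 * π)
      (f := fun θ => g (ofReIm q (θ, φ))) (f' := fun θ => I • g₁ (ofReIm q (θ, φ)))
      (fun θ _ => hd (θ, φ))
      ((continuous_const.smul (hg₁.comp (Continuous.prodMk_left φ))).intervalIntegrable _ _)
    have hend : ofReIm q (2 * π, φ) = ofReIm q (0, φ) + (2 * π * I, 0) := by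
      simpa using ofReIm_add_two_pi_fst q (0, φ)
    rw [hend, hg, sub_self, intervalIntegral.integral_smul, smul_eq_zero,
      intervalIntegral.integral_of_le Real.two_pi_pos.le, ← integral_Icc_eq_integral_Ioc] at hftc
    exact hftc.resolve_left I_ne_zero
  rw [angleIntegral, angleBox, Measure.volume_eq_prod, ← setIntegral_prod_swap,
    setIntegral_prod]
  · simp [hperiod]
  · exact (hg₁.comp continuous_swap).continuousOn.integrableOn_compact
      (isCompact_Icc.prod isCompact_Icc)

theorem angleIntegral_eq_zero_of_hasDerivAt_angle_snd {g g₂ : ℂ × ℂ → Y}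
    (hg : Function.Periodic g (0, 2 * π * I)) {q : ℝ × ℝ}
    (hg₂ : Continuous fun t => g₂ (ofReIm q t))
    (hd : ∀ t, HasDerivAt (fun φ => g (ofReIm q (t.1, φ))) (I • g₂ (ofReIm q t)) t.2) :
    angleIntegral g₂ q = 0 := by
  rw [← Prod.swap_swap q, ← angleIntegral_comp_swap]
  refine angleIntegral_eq_zero_of_hasDerivAt_angle_fst (g := g ∘ Prod.swap)
    (fun ζ => by simpa using hg ζ.swap) ?_ fun t => ?_
  · simpa [Function.comp_def, ← ofReIm_swap] using hg₂.comp continuous_swap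
  · simpa [← ofReIm_swap] using hd t.swap

end Periodic

section Holomorphic

variable {Y : Type*} [NormedAddCommGroup Y] [NormedSpace ℂ Y]

section Directional

variable {g : ℂ × ℂ → Y} {g' : ℂ × ℂ →L[ℂ] Y} {q t : ℝ × ℝ}

theorem HasFDerivAt.hasDerivAt_ofReIm_fst (h : HasFDerivAt g g' (ofReIm q t)) :
    HasDerivAt (fun x => g (ofReIm (x, q.2) t)) (g' (1, 0)) q.1 := by
  have hpath : HasDerivAt (fun x : ℝ => ofReIm (x, q.2) t) ((1 : ℂ), (0 : ℂ)) q.1 := by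
    simpa [ofReIm] using ((hasDerivAt_id q.1).ofReal_comp.add_const (↑t.1 * I)).prodMk
      (hasDerivAt_const q.1 ((q.2 : ℂ) + t.2 * I))
  exact (h.restrictScalars ℝ).comp_hasDerivAt q.1 hpath

theorem HasFDerivAt.hasDerivAt_ofReIm_snd (h : HasFDerivAt g g' (ofReIm q t)) :
    HasDerivAt (fun y => g (ofReIm (q.1, y) t)) (g' (0, 1)) q.2 := by
  have hpath : HasDerivAt (fun y : ℝ => ofReIm (q.1, y) t) ((0 : ℂ), (1 : ℂ)) q.2 := by
    simpa [ofReIm] using (hasDerivAt_const q.2 ((q.1 : ℂ) + t.1 * I)).prodMk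
      ((hasDerivAt_id q.2).ofReal_comp.add_const (↑t.2 * I))
  exact (h.restrictScalars ℝ).comp_hasDerivAt q.2 hpath

theorem HasFDerivAt.hasDerivAt_ofReIm_angle_fst (h : HasFDerivAt g g' (ofReIm q t)) :
    HasDerivAt (fun θ => g (ofReIm q (θ, t.2))) (I • g' (1, 0)) t.1 := by
  have hpath : HasDerivAt (fun θ : ℝ => ofReIm q (θ, t.2)) (I • ((1 : ℂ), (0 : ℂ))) t.1 := by
    simpa [ofReIm] using
      (((hasDerivAt_id t.1).ofReal_comp.mul_const I).const_add (q.1 : ℂ)).prodMk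
        (hasDerivAt_const t.1 ((q.2 : ℂ) + t.2 * I))
  simpa only [Function.comp_def, ContinuousLinearMap.coe_restrictScalars', map_smul] using
    (h.restrictScalars ℝ).comp_hasDerivAt t.1 hpath

theorem HasFDerivAt.hasDerivAt_ofReIm_angle_snd (h : HasFDerivAt g g' (ofReIm q t)) :
    HasDerivAt (fun φ => g (ofReIm q (t.1, φ))) (I • g' (0, 1)) t.2 := by
  have hpath : HasDerivAt (fun φ : ℝ => ofReIm q (t.1, φ)) (I • ((0 : ℂ), (1 : ℂ))) t.2 := by
    simpa [ofReIm] using (hasDerivAt_const t.2 ((q.1 : ℂ) + t.1 * I)).prodMk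
      (((hasDerivAt_id t.2).ofReal_comp.mul_const I).const_add (q.2 : ℂ))
  simpa only [Function.comp_def, ContinuousLinearMap.coe_restrictScalars', map_smul] using
    (h.restrictScalars ℝ).comp_hasDerivAt t.2 hpath

end Directional

variable [CompleteSpace Y] {g : ℂ × ℂ → Y} {U : Set (ℂ × ℂ)}

theorem hasDerivAt_angleIntegral_fst_eq_zero (hU : IsOpen U) (hg : ContDiffOn ℂ 1 g U)
    (hper : Function.Periodic g (2 * π * I, 0)) {q : ℝ × ℝ}
    (hq : ∀ᶠ r in 𝓝 q, ∀ t, ofReIm r t ∈ U) :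
    HasDerivAt (fun x => angleIntegral g (x, q.2)) 0 q.1 := by
  have hd : ∀ ζ ∈ U, HasFDerivAt g (fderiv ℂ g ζ) ζ := fun ζ hζ =>
    ((hg.differentiableOn one_ne_zero ζ hζ).differentiableAt (hU.mem_nhds hζ)).hasFDerivAt
  have hc : ContinuousOn (fun ζ => fderiv ℂ g ζ (1, 0)) U :=
    (hg.continuousOn_fderiv_of_isOpen hU le_rfl).clm_apply continuousOn_const
  have h := hasDerivAt_angleIntegral_fst hg.continuousOn hc
    (fun _ _ h => (hd _ h).hasDerivAt_ofReIm_fst) hq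
  rwa [angleIntegral_eq_zero_of_hasDerivAt_angle_fst hper
    (hc.comp_continuous (by fun_prop) hq.self_of_nhds)
    (fun t => (hd _ (hq.self_of_nhds t)).hasDerivAt_ofReIm_angle_fst)] at h

theorem hasDerivAt_angleIntegral_snd_eq_zero (hU : IsOpen U) (hg : ContDiffOn ℂ 1 g U)
    (hper : Function.Periodic g (0, 2 * π * I)) {q : ℝ × ℝ}
    (hq : ∀ᶠ r in 𝓝 q, ∀ t, ofReIm r t ∈ U) :
    HasDerivAt (fun y => angleIntegral g (q.1, y)) 0 q.2 := by
  have hd : ∀ ζ ∈ U, HasFDerivAt g (fderiv ℂ g ζ) ζ := fun ζ hζ =>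
    ((hg.differentiableOn one_ne_zero ζ hζ).differentiableAt (hU.mem_nhds hζ)).hasFDerivAt
  have hc : ContinuousOn (fun ζ => fderiv ℂ g ζ (0, 1)) U :=
    (hg.continuousOn_fderiv_of_isOpen hU le_rfl).clm_apply continuousOn_const
  have h := hasDerivAt_angleIntegral_snd hg.continuousOn hc
    (fun _ _ h => (hd _ h).hasDerivAt_ofReIm_snd) hq
  rwa [angleIntegral_eq_zero_of_hasDerivAt_angle_snd hper
    (hc.comp_continuous (by fun_prop) hq.self_of_nhds)
    (fun t => (hd _ (hq.self_of_nhds t)).hasDerivAt_ofReIm_angle_snd)] at h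

theorem IsOpen.angleIntegral_eq_of_isPreconnected (hU : IsOpen U) (hg : ContDiffOn ℂ 1 g U)
    (hper₁ : Function.Periodic g (2 * π * I, 0)) (hper₂ : Function.Periodic g (0, 2 * π * I))
    {S : Set (ℝ × ℝ)} (hS : IsOpen S) (hS' : IsPreconnected S)
    (hSU : ∀ q ∈ S, ∀ t, ofReIm q t ∈ U) {p q : ℝ × ℝ} (hp : p ∈ S) (hq : q ∈ S) :
    angleIntegral g q = angleIntegral g p :=
  hS.eq_of_hasDerivAt_fst_snd_zero hS'
    (fun _ hr => hasDerivAt_angleIntegral_fst_eq_zero hU hg hper₁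
      (eventually_of_mem (hS.mem_nhds hr) hSU))
    (fun _ hr => hasDerivAt_angleIntegral_snd_eq_zero hU hg hper₂
      (eventually_of_mem (hS.mem_nhds hr) hSU)) hp hq

end Holomorphic

def amoebaCompl (f : ℂ × ℂ → ℂ) : Set (ℝ × ℝ) := {q | ∀ t, f (ofReIm q t) ≠ 0}

section Amoeba

variable {f : ℂ × ℂ → ℂ}

theorem exists_mem_angleBox_eq (hper₁ : Function.Periodic f (2 * π * I, 0))
    (hper₂ : Function.Periodic f (0, 2 * π * I)) (q t : ℝ × ℝ) :
    ∃ t' ∈ angleBox, f (ofReIm q t) = f (ofReIm q t') := by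
  obtain ⟨θ, hθ, hθeq⟩ := Function.Periodic.exists_mem_Ico₀
    (f := fun θ => f (ofReIm q (θ, t.2)))
    (fun θ => by simpa using congrArg f (ofReIm_add_two_pi_fst q (θ, t.2)) ▸ hper₁ _)
    Real.two_pi_pos t.1
  obtain ⟨φ, hφ, hφeq⟩ := Function.Periodic.exists_mem_Ico₀
    (f := fun φ => f (ofReIm q (θ, φ)))
    (fun φ => by simpa using congrArg f (ofReIm_add_two_pi_snd q (θ, φ)) ▸ hper₂ _)
    Real.two_pi_pos t.2
  exact ⟨(θ, φ), ⟨Ico_subset_Icc_self hθ, Ico_subset_Icc_self hφ⟩, hθeq.trans hφeq⟩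

theorem isOpen_amoebaCompl (hf : Continuous f) (hper₁ : Function.Periodic f (2 * π * I, 0))
    (hper₂ : Function.Periodic f (0, 2 * π * I)) : IsOpen (amoebaCompl f) := by
  have hbox : amoebaCompl f = {q | ∀ t ∈ angleBox, f (ofReIm q t) ≠ 0} := by
    ext q
    refine ⟨fun hq t _ => hq t, fun hq t => ?_⟩
    obtain ⟨t', ht', heq⟩ := exists_mem_angleBox_eq hper₁ hper₂ q t
    exact heq ▸ hq t' ht'
  rw [hbox, isOpen_iff_mem_nhds]
  intro q hq
  exact isCompact_angleBox.eventually_forall_of_forall_eventually fun t ht =>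
    (hf.comp continuous_ofReIm).continuousAt.eventually_ne (hq t ht)

theorem hasDerivAt_angleIntegral_log_norm_fst (hf : ContDiff ℂ 1 f) {q : ℝ × ℝ}
    (hq : ∀ᶠ r in 𝓝 q, r ∈ amoebaCompl f) :
    HasDerivAt (fun x => angleIntegral (fun ζ => Real.log ‖f ζ‖) (x, q.2))
      (angleIntegral (fun ζ => fderiv ℂ f ζ (1, 0) / f ζ) q).re q.1 := by
  have hquot : ContinuousOn (fun ζ => fderiv ℂ f ζ (1, 0) / f ζ) {ζ | f ζ ≠ 0} :=
    ((hf.continuous_fderiv one_ne_zero).clm_apply continuous_const).continuousOn.div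
      hf.continuous.continuousOn fun _ h => h
  rw [← angleIntegral_re hquot hq.self_of_nhds]
  exact hasDerivAt_angleIntegral_fst (U := {ζ | f ζ ≠ 0})
    (hf.continuous.norm.continuousOn.log fun _ h => norm_ne_zero_iff.2 h)
    (continuous_re.comp_continuousOn hquot)
    (fun _ _ h => ((hf.differentiable one_ne_zero _).hasFDerivAt.hasDerivAt_ofReIm_fst).log_norm h)
    hq

theorem hasDerivAt_angleIntegral_log_norm_snd (hf : ContDiff ℂ 1 f) {q : ℝ × ℝ}
    (hq : ∀ᶠ r in 𝓝 q, r ∈ amoebaCompl f) :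
    HasDerivAt (fun y => angleIntegral (fun ζ => Real.log ‖f ζ‖) (q.1, y))
      (angleIntegral (fun ζ => fderiv ℂ f ζ (0, 1) / f ζ) q).re q.2 := by
  have hquot : ContinuousOn (fun ζ => fderiv ℂ f ζ (0, 1) / f ζ) {ζ | f ζ ≠ 0} :=
    ((hf.continuous_fderiv one_ne_zero).clm_apply continuous_const).continuousOn.div
      hf.continuous.continuousOn fun _ h => h
  rw [← angleIntegral_re hquot hq.self_of_nhds]
  exact hasDerivAt_angleIntegral_snd (U := {ζ | f ζ ≠ 0})
    (hf.continuous.norm.continuousOn.log fun _ h => norm_ne_zero_iff.2 h)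
    (continuous_re.comp_continuousOn hquot)
    (fun _ _ h => ((hf.differentiable one_ne_zero _).hasFDerivAt.hasDerivAt_ofReIm_snd).log_norm h)
    hq

theorem contDiffOn_fderiv_apply_div (hf : ContDiff ℂ 2 f) (v : ℂ × ℂ) :
    ContDiffOn ℂ 1 (fun ζ => fderiv ℂ f ζ v / f ζ) {ζ | f ζ ≠ 0} :=
  ((hf.fderiv_right (m := 1) (by norm_num)).clm_apply contDiff_const).contDiffOn.div
    (hf.of_le (by norm_num)).contDiffOn fun _ h => h

theorem exists_affine_angleIntegral_log_norm (hf : ContDiff ℂ 2 f)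
    (hper₁ : Function.Periodic f (2 * π * I, 0)) (hper₂ : Function.Periodic f (0, 2 * π * I))
    {p : ℝ × ℝ} (hp : p ∈ amoebaCompl f) :
    ∃ a b c : ℝ, ∀ q ∈ connectedComponentIn (amoebaCompl f) p,
      angleIntegral (fun ζ => Real.log ‖f ζ‖) q = a * q.1 + b * q.2 + c := by
  have hΩ := isOpen_amoebaCompl hf.continuous hper₁ hper₂
  set K := connectedComponentIn (amoebaCompl f) p
  have hK : IsOpen K := hΩ.connectedComponentIn
  have hK' : IsPreconnected K := isPreconnected_connectedComponentIn
  have hnhds : ∀ q ∈ K, ∀ᶠ r in 𝓝 q, r ∈ amoebaCompl f := fun q hq =>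
    hΩ.mem_nhds (connectedComponentIn_subset _ _ hq)
  have hW : ∀ v, ∀ q ∈ K, angleIntegral (fun ζ => fderiv ℂ f ζ v / f ζ) q =
      angleIntegral (fun ζ => fderiv ℂ f ζ v / f ζ) p := fun v q hq =>
    (isOpen_ne_fun hf.continuous continuous_const).angleIntegral_eq_of_isPreconnected
      (contDiffOn_fderiv_apply_div hf v)
      (fun ζ => by simp only [hper₁.fderiv ζ, hper₁ ζ])
      (fun ζ => by simp only [hper₂.fderiv ζ, hper₂ ζ])
      hK hK' (fun q hq => connectedComponentIn_subset _ _ hq) (mem_connectedComponentIn hp) hq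
  obtain ⟨c, hc⟩ := hK.exists_eq_affine_of_hasDerivAt_fst_snd hK'
    (fun q hq => hW (1, 0) q hq ▸
      hasDerivAt_angleIntegral_log_norm_fst (hf.of_le (by norm_num)) (hnhds q hq))
    (fun q hq => hW (0, 1) q hq ▸
      hasDerivAt_angleIntegral_log_norm_snd (hf.of_le (by norm_num)) (hnhds q hq))
  exact ⟨_, _, c, hc⟩

end Amoeba

noncomputable def expEval (P : (ℤ × ℤ) →₀ ℂ) (ζ : ℂ × ℂ) : ℂ := lEval P (exp ζ.1) (exp ζ.2)

section LaurentPolynomial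

variable (P : (ℤ × ℤ) →₀ ℂ)

theorem expEval_eq_sum (ζ : ℂ × ℂ) :
    expEval P ζ = ∑ a ∈ P.support, P a * exp (a.1 * ζ.1 + a.2 * ζ.2) := by
  refine Finset.sum_congr rfl fun a _ => ?_
  dsimp only
  rw [← exp_int_mul, ← exp_int_mul, mul_assoc, ← exp_add]

theorem contDiff_expEval {n : WithTop ℕ∞} : ContDiff ℂ n (expEval P) := by
  simp_rw [funext (expEval_eq_sum P)]
  fun_prop

theorem expEval_periodic_fst : Function.Periodic (expEval P) (2 * π * I, 0) := fun ζ => by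
  simp [expEval, exp_periodic ζ.1]

theorem expEval_periodic_snd : Function.Periodic (expEval P) (0, 2 * π * I) := fun ζ => by
  simp [expEval, exp_periodic ζ.2]

theorem compl_amoeba_eq : (amoeba P)ᶜ = amoebaCompl (expEval P) := by
  ext q
  simp only [mem_compl_iff, amoeba, amoebaCompl, mem_ofPred_eq, not_exists, not_and]
  constructor
  · intro hq t h0
    refine hq _ _ (exp_ne_zero _) (exp_ne_zero _) h0 ?_ ?_ <;> simp [ofReIm, norm_exp]
  · intro hq z w hz hw h0 hzq hwq
    refine hq (z.arg, w.arg) ?_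
    have hpolar : ∀ {x : ℂ} {r : ℝ}, ‖x‖ = Real.exp r → exp (r + x.arg * I) = x := fun h => by
      rw [exp_add, ← ofReal_exp, ← h, norm_mul_exp_arg_mul_I]
    rwa [expEval, ofReIm, hpolar hzq, hpolar hwq]

theorem ronkin_eq_angleIntegral {q : ℝ × ℝ} (hq : q ∈ (amoeba P)ᶜ) :
    ronkin P q = (2 * π)⁻¹ ^ 2 * angleIntegral (fun ζ => Real.log ‖expEval P ζ‖) q := by
  rw [compl_amoeba_eq] at hq
  have hcont : ContinuousOn (fun ζ => Real.log ‖expEval P ζ‖) {ζ | expEval P ζ ≠ 0} :=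
    (contDiff_expEval P (n := 0)).continuous.norm.continuousOn.log
      fun _ h => norm_ne_zero_iff.2 h
  rw [angleIntegral_eq_intervalIntegral (integrableOn_angleBox hcont hq)]
  rfl

end LaurentPolynomial

theorem ronkin_affine_off_amoeba_general (P : (ℤ × ℤ) →₀ ℂ)
    (p : ℝ × ℝ) (hp : p ∈ (amoeba P)ᶜ) :
    ∃ a b c : ℝ, ∀ q ∈ connectedComponentIn (amoeba P)ᶜ p,
      ronkin P q = a * q.1 + b * q.2 + c := by
  rw [compl_amoeba_eq] at hp ⊢
  obtain ⟨a, b, c, h⟩ := exists_affine_angleIntegral_log_norm (contDiff_expEval P)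
    (expEval_periodic_fst P) (expEval_periodic_snd P) hp
  refine ⟨(2 * π)⁻¹ ^ 2 * a, (2 * π)⁻¹ ^ 2 * b, (2 * π)⁻¹ ^ 2 * c, fun q hq => ?_⟩
  have hqΩ : q ∈ (amoeba P)ᶜ := compl_amoeba_eq P ▸ connectedComponentIn_subset _ _ hq
  rw [ronkin_eq_angleIntegral P hqΩ, h q hq]
  ring

/-- The Ronkin function of a nonzero Laurent polynomial `P` is affine (linear plus
constant) on each connected component of the complement of the amoeba of `P`. -/
theorem ronkin_affine_off_amoeba (P : (ℤ × ℤ) →₀ ℂ) (hP : P ≠ 0)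
    (p : ℝ × ℝ) (hp : p ∈ (amoeba P)ᶜ) :
    ∃ a b c : ℝ, ∀ q ∈ connectedComponentIn (amoeba P)ᶜ p,
      ronkin P q = a * q.1 + b * q.2 + c :=
  ronkin_affine_off_amoeba_general P p hp
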